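/- Fix gains k₁, k₂ > 0 and h ∈ {−1,1}. The closed-loop vector field on vec coordinates, given by η̇ = ½k₁h‖μ‖², μ̇ = −½k₁hη μ, η̇' = ½(k₁h + k₂η)(μ·μ'), μ̇' = ½((k₁h − k₂η)(μ×μ') − k₁hη'μ − k₂η²μ'), vanishes at a unit dual quaternion q if and only if q = 1 or q = −1 (equivalently vec(q) = ±(1,0,0,0,0,0,0,0)). -/
import Mathlib


noncomputable section

/-- Euclidean dot product in `ℝ³`. -/
def dot3 (u v : Fin 3 → ℝ) : ℝ := u 0 * v 0 + u 1 * v 1 + u 2 * v 2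

/-- The closed-loop vector field (in vec coordinates of a unit dual quaternion
`q = (η + μ) + ε(η' + μ')`, so that `η² + ‖μ‖² = 1` and `ηη' + μ·μ' = 0`) vanishes
if and only if `q = 1` or `q = −1`. -/
theorem closed_loop_equilibria (k₁ k₂ h η η' : ℝ) (μ μ' : Fin 3 → ℝ)
    (hk₁ : 0 < k₁) (hk₂ : 0 < k₂) (hh : h = 1 ∨ h = -1)
    (hunit : η ^ 2 + dot3 μ μ = 1) (hconstr : η * η' + dot3 μ μ' = 0) :
    ((1 / 2) * k₁ * h * dot3 μ μ = 0 ∧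
     (-(1 / 2) * k₁ * h * η) • μ = 0 ∧
     (1 / 2) * (k₁ * h + k₂ * η) * dot3 μ μ' = 0 ∧
     (1 / 2 : ℝ) • ((k₁ * h - k₂ * η) • (crossProduct μ μ') - (k₁ * h * η') • μ -
        (k₂ * η ^ 2) • μ') = 0) ↔
    ((η = 1 ∧ μ = 0 ∧ η' = 0 ∧ μ' = 0) ∨ (η = -1 ∧ μ = 0 ∧ η' = 0 ∧ μ' = 0)) := by
  constructor
  · rintro ⟨e1, e2, e3, e4⟩
    have hh' : k₁ * h ≠ 0 := by
      rcases hh with h1 | h1 <;> subst h1 <;> simpa using hk₁.ne'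
    have hdot : dot3 μ μ = 0 := by
      rcases mul_eq_zero.mp e1 with h1 | h1
      · exact absurd (by linear_combination 2 * h1) hh'
      · exact h1
    have h00 : μ 0 ^ 2 + μ 1 ^ 2 + μ 2 ^ 2 = 0 := by
      simp only [dot3] at hdot; nlinarith
    have c0 : μ 0 = 0 := by nlinarith [sq_nonneg (μ 0), sq_nonneg (μ 1), sq_nonneg (μ 2)]
    have c1 : μ 1 = 0 := by nlinarith [sq_nonneg (μ 0), sq_nonneg (μ 1), sq_nonneg (μ 2)]
    have c2 : μ 2 = 0 := by nlinarith [sq_nonneg (μ 0), sq_nonneg (μ 1), sq_nonneg (μ 2)]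
    have hμ : μ = 0 := by
      funext i; fin_cases i
      · simpa using c0
      · simpa using c1
      · simpa using c2
    have hη2 : η ^ 2 = 1 := by
      rw [hdot] at hunit; linarith
    have hηne : η ≠ 0 := by intro hc; rw [hc] at hη2; norm_num at hη2
    have hη' : η' = 0 := by
      have hd : dot3 μ μ' = 0 := by simp [hμ, dot3]
      rw [hd] at hconstr
      exact (mul_eq_zero.mp (by linarith)).resolve_left hηne
    have hμ' : μ' = 0 := by
      rw [hμ, hη'] at e4
      funext i
      have h5 := congrFun e4 i
      simp [smul_eq_mul] at h5
      have := h5.resolve_left (by rintro (hc | hc); exacts [hk₂.ne' hc, hηne hc])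
      simpa using this
    rcases mul_eq_zero.mp (show (η - 1) * (η + 1) = 0 by nlinarith) with h1 | h1
    · exact Or.inl ⟨by linarith, hμ, hη', hμ'⟩
    · exact Or.inr ⟨by linarith, hμ, hη', hμ'⟩
  · rintro (⟨h1, h2, h3, h4⟩ | ⟨h1, h2, h3, h4⟩) <;> subst h1 <;> subst h2 <;> subst h3 <;> subst h4 <;>
      simp [dot3]
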